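/- arXiv:0704.2262 — 3 statements merged into one kernel-verified Lean document; each statement's English description precedes it below -/
import Mathlib

section
/- Let p and q be distinct odd primes, and let G̃ be the group generated by ε, σ_p, σ_q with ε central of order 2, σ_p σ_q = σ_q σ_p ε, σ_p of order p−1, and σ_q of order 2(q−1) with σ_q^{q−1} = ε. Then the subgroup N generated by σ_p and σ_q² is abelian, has index 2 in G̃, and is isomorphic to ℤ/(p−1) ⊕ ℤ/(q−1). -/
/-!
Write `e, s, t` for `ε, σ_p, σ_q`. Since `e` is central of order 2, `s` commutes with `t²`, and
`e = (t²)^((q-1)/2)` because `q - 1` is even; so `(a, b) ↦ s^a t^(2b)` maps `ℤ/(p-1) × ℤ/(q-1)`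
onto `N = ⟨s, t²⟩`. The model is `ℤ/2(q-1) ⋊ ℤ/(p-1)`, the generator of `ℤ/(p-1)` acting by
multiplication by `q` (an involution, as `q² ≡ 1 mod 2(q-1)`; it has order dividing `p - 1` as
`p` is odd). There `e, s, t ↦ (q-1, 0), (0, 1), (1, 0)` satisfy the relations and
`s^a t^(2b) ↦ (2b, a)`, so the map above is injective and its image misses `t`. Finally `t`
conjugates `e` and `s` into `N` and `t² ∈ N`, so every element lies in `N` or in `t⁻¹N`.
-/

/-- Relators for the group generated by `ε` (index 0), `σ_p` (index 1), `σ_q` (index 2)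
subject to: `ε` central, `ε² = 1`, `σ_p σ_q = σ_q σ_p ε`, `σ_p` of order `p-1`,
`σ_q` of order `2(q-1)` with `σ_q^{q-1} = ε` (Case B of the paper). -/
def stmt2Rels (p q : ℕ) : Set (FreeGroup (Fin 3)) :=
  { (FreeGroup.of 0) ^ 2,
    (FreeGroup.of 0) * (FreeGroup.of 1) * (FreeGroup.of 0)⁻¹ * (FreeGroup.of 1)⁻¹,
    (FreeGroup.of 0) * (FreeGroup.of 2) * (FreeGroup.of 0)⁻¹ * (FreeGroup.of 2)⁻¹,
    (FreeGroup.of 1) ^ (p - 1),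
    (FreeGroup.of 2) ^ (2 * (q - 1)),
    (FreeGroup.of 2) ^ (q - 1) * (FreeGroup.of 0)⁻¹,
    (FreeGroup.of 1) * (FreeGroup.of 2) *
      ((FreeGroup.of 2) * (FreeGroup.of 1) * (FreeGroup.of 0))⁻¹ }

open Multiplicative Subgroup

section ZModLift

variable {G : Type*} [Group G] {m n : ℕ}

def zmodLift (g : G) (hg : g ^ n = 1) : Multiplicative (ZMod n) →* G :=
  AddMonoidHom.toMultiplicativeLeft <|
    ZMod.lift n ⟨zmultiplesHom _ (Additive.ofMul g), by simp [← ofMul_pow, hg]⟩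

@[simp]
lemma zmodLift_ofAdd_intCast (g : G) (hg : g ^ n = 1) (k : ℤ) :
    zmodLift g hg (ofAdd (k : ZMod n)) = g ^ k := by
  simp [zmodLift, AddMonoidHom.toMultiplicativeLeft_apply_apply, ZMod.lift_coe]

@[simp]
lemma zmodLift_ofAdd_one (g : G) (hg : g ^ n = 1) : zmodLift g hg (ofAdd 1) = g := by
  simpa using zmodLift_ofAdd_intCast g hg 1

lemma ZMod.exists_ofAdd_intCast_eq (x : Multiplicative (ZMod n)) :
    ∃ k : ℤ, ofAdd (k : ZMod n) = x :=
  ZMod.intCast_surjective (toAdd x)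

lemma ZMod.exists_ofAdd_intCast_pair_eq (x : Multiplicative (ZMod m × ZMod n)) :
    ∃ i j : ℤ, ofAdd ((i : ZMod m), (j : ZMod n)) = x := by
  obtain ⟨i, hi⟩ := ZMod.intCast_surjective (toAdd x).1
  obtain ⟨j, hj⟩ := ZMod.intCast_surjective (toAdd x).2
  exact ⟨i, j, by rw [hi, hj]; rfl⟩

def zmodProdLift (a b : G) (ha : a ^ m = 1) (hb : b ^ n = 1) (hab : Commute a b) :
    Multiplicative (ZMod m × ZMod n) →* G :=
  (MonoidHom.noncommCoprod (zmodLift a ha) (zmodLift b hb) fun x y => by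
      obtain ⟨i, rfl⟩ := ZMod.exists_ofAdd_intCast_eq x
      obtain ⟨j, rfl⟩ := ZMod.exists_ofAdd_intCast_eq y
      simpa using hab.zpow_zpow i j).comp
    (MulEquiv.prodMultiplicative _ _).toMonoidHom

@[simp]
lemma zmodProdLift_ofAdd_intCast (a b : G) (ha : a ^ m = 1) (hb : b ^ n = 1) (hab : Commute a b)
    (i j : ℤ) :
    zmodProdLift a b ha hb hab (ofAdd ((i : ZMod m), (j : ZMod n))) = a ^ i * b ^ j := by
  simp [zmodProdLift]

lemma range_zmodProdLift (a b : G) (ha : a ^ m = 1) (hb : b ^ n = 1) (hab : Commute a b) :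
    (zmodProdLift a b ha hb hab).range = closure {a, b} := by
  refine le_antisymm ?_ ((closure_le _).mpr ?_)
  · rintro _ ⟨x, rfl⟩
    obtain ⟨i, j, rfl⟩ := ZMod.exists_ofAdd_intCast_pair_eq x
    rw [zmodProdLift_ofAdd_intCast]
    exact mul_mem (zpow_mem (subset_closure (by simp)) i) (zpow_mem (subset_closure (by simp)) j)
  · rintro _ (rfl | rfl)
    · exact ⟨ofAdd (((1 : ℤ) : ZMod m), ((0 : ℤ) : ZMod n)), by
        rw [zmodProdLift_ofAdd_intCast]; simp⟩
    · exact ⟨ofAdd (((0 : ℤ) : ZMod m), ((1 : ℤ) : ZMod n)), by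
        rw [zmodProdLift_ofAdd_intCast]; simp⟩

end ZModLift

theorem Subgroup.index_eq_two_of_closure_insert {G : Type*} [Group G] {H : Subgroup G}
    {s : Set G} {t : G} (hgen : closure (insert t s) = ⊤) (hs : s ⊆ H)
    (hconj : ∀ x ∈ s, t * x * t⁻¹ ∈ H) (ht2 : t ^ 2 ∈ H) (ht : t ∉ H) : H.index = 2 := by
  refine index_eq_two_iff_exists_notMem_and'.mpr ⟨t, ht, fun b => ?_⟩
  induction hgen ▸ mem_top b using closure_induction_left with
  | one => exact .inr H.one_mem
  | mul_left x hx y _ ih =>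
    obtain rfl | hx := hx
    · refine ih.symm.imp (fun hy => ?_) id
      simpa [pow_two, mul_assoc] using H.mul_mem ht2 hy
    · refine ih.imp (fun hy => ?_) (H.mul_mem (hs hx))
      simpa [mul_assoc] using H.mul_mem (hconj x hx) hy
  | inv_mul_cancel x hx y _ ih =>
    obtain rfl | hx := hx
    · refine ih.symm.imp (by simpa using ·) (fun hy => ?_)
      simpa [pow_two, mul_assoc] using H.mul_mem (H.inv_mem ht2) hy
    · refine ih.imp (fun hy => ?_) (H.mul_mem (H.inv_mem (hs hx)))
      simpa [mul_assoc] using H.mul_mem (H.inv_mem (hconj x hx)) hy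

theorem SemidirectProduct.inr_mul_inl {N H : Type*} [Group N] [Group H] {φ : H →* MulAut N}
    (h : H) (n : N) : (inr h * inl n : N ⋊[φ] H) = inl (φ h n) * inr h := by
  ext <;> simp

theorem SemidirectProduct.inr_mul_inl_eq_inl_iff {N H : Type*} [Group N] [Group H]
    {φ : H →* MulAut N} {h : H} {n n' : N} :
    (inr h * inl n : N ⋊[φ] H) = inl n' ↔ h = 1 ∧ n = n' := by
  refine ⟨fun hx => ?_, fun ⟨hh, hn⟩ => by simp [hh, hn]⟩
  obtain rfl : h = 1 := by simpa using congrArg SemidirectProduct.right hx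
  simpa using hx

lemma ZMod.intCast_two_mul_eq_zero_iff (n : ℕ) (j : ℤ) :
    ((2 * j : ℤ) : ZMod (2 * n)) = 0 ↔ (j : ZMod n) = 0 := by
  simp only [ZMod.intCast_zmod_eq_zero_iff_dvd, Nat.cast_mul, Nat.cast_ofNat]
  exact mul_dvd_mul_iff_left two_ne_zero

lemma ZMod.intCast_two_mul_ne_one (n : ℕ) (j : ℤ) : ((2 * j : ℤ) : ZMod (2 * n)) ≠ 1 := by
  intro h
  have := congrArg (ZMod.castHom (dvd_mul_right 2 n) (ZMod 2)) h
  rw [map_intCast, map_one, Int.cast_mul, Int.cast_two, show (2 : ZMod 2) = 0 from rfl,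
    zero_mul] at this
  exact zero_ne_one this

structure SatisfiesStmt2Rels {G : Type*} [Group G] (p q : ℕ) (e s t : G) : Prop where
  e_sq : e ^ 2 = 1
  commute_e_s : Commute e s
  commute_e_t : Commute e t
  s_pow : s ^ (p - 1) = 1
  t_pow : t ^ (2 * (q - 1)) = 1
  t_pow_half : t ^ (q - 1) = e
  s_mul_t : s * t = t * s * e

lemma lift_stmt2Rels_eq_one_iff {G : Type*} [Group G] {p q : ℕ} (f : Fin 3 → G) :
    (∀ r ∈ stmt2Rels p q, FreeGroup.lift f r = 1) ↔ SatisfiesStmt2Rels p q (f 0) (f 1) (f 2) := by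
  simp only [stmt2Rels, Set.mem_insert_iff, Set.mem_singleton_iff, forall_eq_or_imp, forall_eq,
    map_mul, map_pow, map_inv, FreeGroup.lift_apply_of, mul_inv_eq_iff_eq_mul, one_mul]
  exact ⟨fun ⟨h1, h2, h3, h4, h5, h6, h7⟩ => ⟨h1, h2, h3, h4, h5, h6, h7⟩,
    fun ⟨h1, h2, h3, h4, h5, h6, h7⟩ => ⟨h1, h2, h3, h4, h5, h6, h7⟩⟩

namespace SatisfiesStmt2Rels

variable {G : Type*} [Group G] {p q : ℕ} {e s t : G} (h : SatisfiesStmt2Rels p q e s t)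
include h

lemma t_mul_s : t * s = s * t * e := by
  rw [h.s_mul_t, mul_assoc, mul_assoc, ← sq, h.e_sq, mul_one]

lemma commute_s_t_sq : Commute s (t ^ 2) :=
  calc s * t ^ 2 = s * t * t := by rw [sq, mul_assoc]
    _ = t * s * t * e := by rw [h.s_mul_t]; simp only [mul_assoc, h.commute_e_t.eq]
    _ = t ^ 2 * s * e ^ 2 := by rw [mul_assoc t s t, h.s_mul_t]; simp only [sq, mul_assoc]
    _ = t ^ 2 * s := by rw [h.e_sq, mul_one]

lemma t_mul_s_mul_t_inv : t * s * t⁻¹ = s * e := by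
  rw [h.t_mul_s, mul_assoc _ e, h.commute_e_t.inv_right.eq, ← mul_assoc, mul_inv_cancel_right]

lemma e_eq_t_sq_pow (hq : Odd q) : e = (t ^ 2) ^ ((q - 1) / 2) := by
  rw [← pow_mul, Nat.two_mul_div_two_of_even (Nat.Odd.sub_odd hq odd_one), h.t_pow_half]

end SatisfiesStmt2Rels

section Model

variable {p q : ℕ}

lemma natCast_mul_self_eq_one_of_odd (hq : Odd q) : (q : ZMod (2 * (q - 1))) * q = 1 := by
  obtain ⟨k, rfl⟩ := hq
  have h : ((2 * (2 * k + 1 - 1) : ℕ) : ZMod (2 * (2 * k + 1 - 1))) = 0 := ZMod.natCast_self _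
  simp only [Nat.add_sub_cancel] at h ⊢
  push_cast at h ⊢
  linear_combination (k + 1) * h

lemma natCast_mul_natCast_sub_one_of_odd (hq : Odd q) :
    (q : ZMod (2 * (q - 1))) * ((q - 1 : ℕ) : ZMod (2 * (q - 1))) = ((q - 1 : ℕ) : ZMod _) := by
  obtain ⟨k, rfl⟩ := hq
  have h : ((2 * (2 * k + 1 - 1) : ℕ) : ZMod (2 * (2 * k + 1 - 1))) = 0 := ZMod.natCast_self _
  simp only [Nat.add_sub_cancel] at h ⊢
  push_cast at h ⊢
  linear_combination k * h

def oddUnit (hq : Odd q) : (ZMod (2 * (q - 1)))ˣ :=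
  ⟨q, q, natCast_mul_self_eq_one_of_odd hq, natCast_mul_self_eq_one_of_odd hq⟩

lemma oddUnit_pow_sub_one (hq : Odd q) (hp : Odd p) : oddUnit hq ^ (p - 1) = 1 := by
  obtain ⟨k, hk⟩ := (Nat.Odd.sub_odd hp odd_one).two_dvd
  rw [hk, pow_mul, show oddUnit hq ^ 2 = 1 from Units.ext (by simp [sq, oddUnit,
    natCast_mul_self_eq_one_of_odd hq]), one_pow]

def modelAction (hp : Odd p) (hq : Odd q) :
    Multiplicative (ZMod (p - 1)) →* MulAut (Multiplicative (ZMod (2 * (q - 1)))) :=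
  (MulAutMultiplicative _).symm.toMonoidHom.comp
    ((DistribMulAction.toAddAut _ _).comp (zmodLift (oddUnit hq) (oddUnit_pow_sub_one hq hp)))

@[simp]
lemma modelAction_ofAdd_one_apply (hp : Odd p) (hq : Odd q) (x : ZMod (2 * (q - 1))) :
    modelAction hp hq (ofAdd 1) (ofAdd x) = ofAdd (q * x) := by
  simp [modelAction, oddUnit]

abbrev Stmt2Model (hp : Odd p) (hq : Odd q) :=
  Multiplicative (ZMod (2 * (q - 1))) ⋊[modelAction hp hq] Multiplicative (ZMod (p - 1))

open SemidirectProduct in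
lemma satisfiesStmt2Rels_model (hp : Odd p) (hq : Odd q) :
    SatisfiesStmt2Rels p q
      (inl (ofAdd ((q - 1 : ℕ) : ZMod (2 * (q - 1)))) : Stmt2Model hp hq)
      (inr (ofAdd 1)) (inl (ofAdd 1)) where
  e_sq := by
    rw [← map_pow, ← ofAdd_nsmul, two_nsmul, ← Nat.cast_add, ← two_mul, ZMod.natCast_self,
      ofAdd_zero, map_one]
  commute_e_s := by
    rw [Commute, SemiconjBy, inr_mul_inl, modelAction_ofAdd_one_apply,
      natCast_mul_natCast_sub_one_of_odd hq]
  commute_e_t := (Commute.all _ _).map inl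
  s_pow := by
    rw [← map_pow, ← ofAdd_nsmul, nsmul_one, ZMod.natCast_self, ofAdd_zero, map_one]
  t_pow := by
    rw [← map_pow, ← ofAdd_nsmul, nsmul_one, ZMod.natCast_self, ofAdd_zero, map_one]
  t_pow_half := by
    rw [← map_pow, ← ofAdd_nsmul, nsmul_one]
  s_mul_t := by
    rw [mul_assoc, inr_mul_inl, inr_mul_inl, ← mul_assoc, ← map_mul, modelAction_ofAdd_one_apply,
      modelAction_ofAdd_one_apply, natCast_mul_natCast_sub_one_of_odd hq, mul_one, ← ofAdd_add,
      Nat.cast_sub hq.pos, Nat.cast_one, add_sub_cancel]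

end Model

section PresentedGroup

open PresentedGroup SemidirectProduct

variable {p q : ℕ}

lemma satisfiesStmt2Rels_of (p q : ℕ) :
    SatisfiesStmt2Rels p q (of (rels := stmt2Rels p q) 0) (of 1) (of 2) := by
  refine (lift_stmt2Rels_eq_one_iff _).mp fun r hr => ?_
  have : FreeGroup.lift of r = PresentedGroup.mk (stmt2Rels p q) r := by
    congr 1; ext; rfl
  rw [this]; exact one_of_mem hr

lemma closure_insert_of_two_eq_top :
    closure (insert (of 2) {of 0, of 1} : Set (PresentedGroup (stmt2Rels p q))) = ⊤ := by
  rw [eq_top_iff, ← closure_range_of]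
  refine closure_mono ?_
  rintro _ ⟨i, rfl⟩
  fin_cases i <;> simp

def toModel (hp : Odd p) (hq : Odd q) : PresentedGroup (stmt2Rels p q) →* Stmt2Model hp hq :=
  toGroup ((lift_stmt2Rels_eq_one_iff ![_, _, _]).mpr (satisfiesStmt2Rels_model hp hq))

lemma toModel_of_one_zpow (hp : Odd p) (hq : Odd q) (k : ℤ) :
    toModel hp hq (of 1 ^ k) = inr (ofAdd (k : ZMod (p - 1))) := by
  rw [map_zpow, toModel, toGroup.of]
  change (inr (ofAdd 1) : Stmt2Model hp hq) ^ k = _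
  rw [← map_zpow, ← ofAdd_zsmul, zsmul_one]

lemma toModel_of_two_zpow (hp : Odd p) (hq : Odd q) (k : ℤ) :
    toModel hp hq (of 2 ^ k) = inl (ofAdd (k : ZMod (2 * (q - 1)))) := by
  rw [map_zpow, toModel, toGroup.of]
  change (inl (ofAdd 1) : Stmt2Model hp hq) ^ k = _
  rw [← map_zpow, ← ofAdd_zsmul, zsmul_one]

lemma intCast_eq_of_zpow_mul_zpow_eq_zpow (hp : Odd p) (hq : Odd q) {i j k : ℤ}
    (h : of (rels := stmt2Rels p q) 1 ^ i * (of 2 ^ 2) ^ j = of 2 ^ k) :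
    (i : ZMod (p - 1)) = 0 ∧ ((2 * j : ℤ) : ZMod (2 * (q - 1))) = k := by
  rw [← zpow_natCast, ← zpow_mul, Nat.cast_two] at h
  simpa [toModel_of_one_zpow, toModel_of_two_zpow, inr_mul_inl_eq_inl_iff] using
    congrArg (toModel hp hq) h

def prodHom (p q : ℕ) :
    Multiplicative (ZMod (p - 1) × ZMod (q - 1)) →* PresentedGroup (stmt2Rels p q) :=
  zmodProdLift (of 1) (of 2 ^ 2) (satisfiesStmt2Rels_of p q).s_pow
    (by rw [← pow_mul, (satisfiesStmt2Rels_of p q).t_pow])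
    (satisfiesStmt2Rels_of p q).commute_s_t_sq

lemma range_prodHom : (prodHom p q).range = closure {of 1, of 2 ^ 2} :=
  range_zmodProdLift _ _ _ _ _

lemma prodHom_injective (hp : Odd p) (hq : Odd q) : Function.Injective (prodHom p q) := by
  refine (injective_iff_map_eq_one _).mpr fun x hx => ?_
  obtain ⟨i, j, rfl⟩ := ZMod.exists_ofAdd_intCast_pair_eq x
  rw [prodHom, zmodProdLift_ofAdd_intCast, ← zpow_zero (of 2)] at hx
  obtain ⟨hi, hj⟩ := intCast_eq_of_zpow_mul_zpow_eq_zpow hp hq hx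
  rw [hi, (ZMod.intCast_two_mul_eq_zero_iff _ _).mp (by exact_mod_cast hj)]
  rfl

lemma of_two_notMem_range_prodHom (hp : Odd p) (hq : Odd q) : of 2 ∉ (prodHom p q).range := by
  rintro ⟨x, hx⟩
  obtain ⟨i, j, rfl⟩ := ZMod.exists_ofAdd_intCast_pair_eq x
  rw [prodHom, zmodProdLift_ofAdd_intCast, ← zpow_one (of 2)] at hx
  have hj := (intCast_eq_of_zpow_mul_zpow_eq_zpow hp hq hx).2
  exact ZMod.intCast_two_mul_ne_one _ j (by exact_mod_cast hj)

lemma index_closure_eq_two (hp : Odd p) (hq : Odd q) :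
    (closure {of 1, of 2 ^ 2} : Subgroup (PresentedGroup (stmt2Rels p q))).index = 2 := by
  let N : Subgroup (PresentedGroup (stmt2Rels p q)) := closure {of 1, of 2 ^ 2}
  have h := satisfiesStmt2Rels_of p q
  have hs : of 1 ∈ N := subset_closure (by simp)
  have ht2 : of 2 ^ 2 ∈ N := subset_closure (by simp)
  have he : of 0 ∈ N := h.e_eq_t_sq_pow hq ▸ pow_mem ht2 _
  refine index_eq_two_of_closure_insert closure_insert_of_two_eq_top ?_ ?_ ht2
    (range_prodHom (p := p) ▸ of_two_notMem_range_prodHom hp hq)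
  · rintro _ (rfl | rfl) <;> assumption
  · rintro _ (rfl | rfl)
    · rwa [h.commute_e_t.symm.mul_inv_cancel]
    · rw [h.t_mul_s_mul_t_inv]
      exact mul_mem hs he

noncomputable def closureMulEquiv (hp : Odd p) (hq : Odd q) :
    (closure {of 1, of 2 ^ 2} : Subgroup (PresentedGroup (stmt2Rels p q))) ≃*
      Multiplicative (ZMod (p - 1) × ZMod (q - 1)) :=
  ((MonoidHom.ofInjective (prodHom_injective hp hq)).trans
    (MulEquiv.subgroupCongr range_prodHom)).symm

end PresentedGroup

theorem stmt_2_general (p q : ℕ) (hp : p.Prime) (hq : q.Prime) (hp2 : p ≠ 2) (hq2 : q ≠ 2)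
    (N : Subgroup (PresentedGroup (stmt2Rels p q)))
    (hN : N = Subgroup.closure
      {PresentedGroup.of 1, (PresentedGroup.of (rels := stmt2Rels p q) 2) ^ 2}) :
    (∀ x y : N, x * y = y * x) ∧ N.index = 2 ∧
      Nonempty (N ≃* Multiplicative (ZMod (p - 1) × ZMod (q - 1))) := by
  subst hN
  have hp' := hp.odd_of_ne_two hp2
  have hq' := hq.odd_of_ne_two hq2
  let e := closureMulEquiv hp' hq'
  exact ⟨fun x y => e.injective (by rw [map_mul, map_mul, mul_comm]),
    index_closure_eq_two hp' hq', ⟨e⟩⟩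

/-- for distinct odd primes `p, q`, in the group
`G̃ = ⟨ε, σ_p, σ_q | ε central of order 2, σ_pσ_q = σ_qσ_pε, σ_p^{p-1} = 1,
σ_q^{2(q-1)} = 1, σ_q^{q-1} = ε⟩`, the subgroup `N = ⟨σ_p, σ_q²⟩` is abelian,
has index 2, and is isomorphic to `ℤ/(p-1) ⊕ ℤ/(q-1)`. -/
theorem stmt_2 (p q : ℕ) (hp : p.Prime) (hq : q.Prime) (hp2 : p ≠ 2) (hq2 : q ≠ 2)
    (hpq : p ≠ q)
    (N : Subgroup (PresentedGroup (stmt2Rels p q)))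
    (hN : N = Subgroup.closure
      {PresentedGroup.of 1, (PresentedGroup.of (rels := stmt2Rels p q) 2) ^ 2}) :
    (∀ x y : N, x * y = y * x) ∧ N.index = 2 ∧
      Nonempty (N ≃* Multiplicative (ZMod (p - 1) × ZMod (q - 1))) :=
  stmt_2_general p q hp hq hp2 hq2 N hN
end

section
/- Let A be the 2×2 integer matrix with rows (p−1, (p−1)/2) and (0, 1−q), where p, q are odd primes with v₂(p−1) ≤ v₂(q−1). Set d = gcd((p−1)/2, q−1), s = (p−1)/(2d), t = (q−1)/d, and choose u, v ∈ ℤ with us + vt = 1. Let P be the matrix with rows (u, v), (−t, s) and Q the matrix with rows (1, 2tv−1), (−1, −2tv+2). Then P and Q lie in SL₂(ℤ) and PAQ is the diagonal matrix diag(d, −2s(q−1)). -/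
open Matrix

/-- Smith normal form computation. For odd primes `p, q` with
`v₂(p-1) ≤ v₂(q-1)`, `d = gcd((p-1)/2, q-1)`, `s = (p-1)/(2d)`, `t = (q-1)/d`,
and `u, v ∈ ℤ` with `us + vt = 1`, the matrices
`P = [[u, v], [-t, s]]` and `Q = [[1, 2tv-1], [-1, -2tv+2]]` lie in `SL₂(ℤ)` and
`P * A * Q = diag(d, -2s(q-1))` where `A = [[p-1, (p-1)/2], [0, 1-q]]`. -/
theorem stmt_5 (p q : ℕ) (hp : p.Prime) (hq : q.Prime) (hp2 : p ≠ 2) (hq2 : q ≠ 2)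
    (hv2 : padicValNat 2 (p - 1) ≤ padicValNat 2 (q - 1))
    (d s t : ℕ) (hd : d = Nat.gcd ((p - 1) / 2) (q - 1))
    (hs : s = (p - 1) / (2 * d)) (ht : t = (q - 1) / d)
    (u v : ℤ) (huv : u * (s : ℤ) + v * (t : ℤ) = 1)
    (A P Q : Matrix (Fin 2) (Fin 2) ℤ)
    (hA : A = !![((p - 1 : ℕ) : ℤ), (((p - 1) / 2 : ℕ) : ℤ); 0, 1 - (q : ℤ)])
    (hP : P = !![u, v; -(t : ℤ), (s : ℤ)])
    (hQ : Q = !![1, 2 * (t : ℤ) * v - 1; -1, -(2 * (t : ℤ) * v) + 2]) :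
    P.det = 1 ∧ Q.det = 1 ∧
      P * A * Q = !![(d : ℤ), 0; 0, -(2 * (s : ℤ) * ((q : ℤ) - 1))] := by
  -- basic divisibilities
  have hpodd : Odd p := hp.odd_of_ne_two hp2
  have hqodd : Odd q := hq.odd_of_ne_two hq2
  have hp1 : 1 ≤ p := hp.one_lt.le
  have hq1 : 1 ≤ q := hq.one_lt.le
  have h2 : 2 ∣ p - 1 := by
    obtain ⟨k, hk⟩ := hpodd
    exact ⟨k, by omega⟩
  have hdm : d ∣ (p - 1) / 2 := hd ▸ Nat.gcd_dvd_left _ _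
  have hdq : d ∣ q - 1 := hd ▸ Nat.gcd_dvd_right _ _
  have hsd : s * d = (p - 1) / 2 := by
    rw [hs, ← Nat.div_div_eq_div_mul]
    exact Nat.div_mul_cancel hdm
  have htd : t * d = q - 1 := ht ▸ Nat.div_mul_cancel hdq
  have hp1' : p - 1 = 2 * (s * d) := by
    rw [hsd]; omega
  have hcast1 : ((p - 1 : ℕ) : ℤ) = 2 * (s : ℤ) * d := by
    rw [hp1']; push_cast; ring
  have hcast2 : (((p - 1) / 2 : ℕ) : ℤ) = (s : ℤ) * d := by
    rw [← hsd]; push_cast; ring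
  have hcast3 : (q : ℤ) - 1 = (t : ℤ) * d := by
    have : ((q - 1 : ℕ) : ℤ) = (t : ℤ) * d := by rw [← htd]; push_cast; ring
    omega
  refine ⟨?_, ?_, ?_⟩
  · rw [hP, Matrix.det_fin_two_of]; linarith [huv]
  · rw [hQ, Matrix.det_fin_two_of]; ring
  · have h1q : (1 : ℤ) - q = -((t : ℤ) * d) := by omega
    rw [hP, hA, hQ, hcast1, hcast2, h1q]
    ext i j
    fin_cases i <;> fin_cases j <;>
        simp [Matrix.mul_apply, Fin.sum_univ_two]
    · linear_combination (d : ℤ) * huv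
    · linear_combination (2 * (t : ℤ) * v * d) * huv
    · ring
    · linear_combination (2 * (s : ℤ)) * hcast3
end

section
/- Let ℓ be a prime with ℓ ≡ 1 (mod 8). Then 2^{(ℓ−1)/4} ≡ 1 (mod ℓ) if and only if ℓ = A² + 64B² for some integers A, B. -/
-- parity aux lemma
lemma aux_parity (a b p t : ℕ) (hp : p = a^2+b^2) (ha : a%2 = 1) (hb : b%4 = 0)
    (ht : 8*t+1 = p) :
    ((if (a+b)%8 = 1 ∨ (a+b)%8 = 7 then (1:ℤ) else -1) * (-1)^t = 1) ↔ b % 8 = 0 := by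
  have hp16 : p % 16 = ((a%16)^2 + (b%16)^2) % 16 := by
    conv_lhs => rw [hp, Nat.add_mod, Nat.pow_mod, Nat.pow_mod b]
    rw [← Nat.add_mod]
  have hab : (a+b)%8 = ((a%16)+(b%16))%8 := by omega
  have hneg : (-1:ℤ)^t = if t % 2 = 0 then 1 else -1 := by
    rcases Nat.even_or_odd t with h | h
    · simp [h.neg_one_pow, Nat.even_iff.mp h]
    · simp [h.neg_one_pow, Nat.odd_iff.mp h]
  rw [hneg]
  have h16 : a % 16 < 16 := Nat.mod_lt _ (by norm_num)
  have h16b : b % 16 < 16 := Nat.mod_lt _ (by norm_num)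
  have hA : a%16 = 1 ∨ a%16 = 3 ∨ a%16 = 5 ∨ a%16 = 7 ∨ a%16 = 9 ∨ a%16 = 11 ∨ a%16 = 13 ∨ a%16 = 15 := by omega
  have hB : b%16 = 0 ∨ b%16 = 4 ∨ b%16 = 8 ∨ b%16 = 12 := by omega
  rcases hA with h1|h1|h1|h1|h1|h1|h1|h1 <;> rcases hB with h2|h2|h2|h2 <;>
    rw [h1, h2] at hp16 hab <;> norm_num at hp16 hab <;>
    split_ifs <;> omega

lemma chi_ab (p : ℕ) [Fact p.Prime] (hp4 : p % 4 = 1) (a b : ℕ) (hp : p = a^2 + b^2)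
    (hab : Odd (a+b)) (hcop : Nat.Coprime a (a+b)) :
    legendreSym p ((a:ℤ)+b) = ZMod.χ₈ ((a+b : ℕ) : ZMod 8) := by
  have h1 : legendreSym p ((a:ℤ)+b) = jacobiSym ((a+b:ℕ):ℤ) p := by
    rw [jacobiSym.legendreSym.to_jacobiSym]; norm_num
  rw [h1, ← jacobiSym.quadratic_reciprocity_one_mod_four hp4 hab]
  have hdvd : ((a+b:ℕ):ℤ) ∣ 2*(a:ℤ)^2 - p := ⟨(a:ℤ) - b, by push_cast [hp]; ring⟩
  have h2 : ((p:ℤ)) % ((a+b:ℕ):ℤ) = (2*(a:ℤ)^2) % ((a+b:ℕ):ℤ) :=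
    Int.modEq_iff_dvd.mpr hdvd
  rw [jacobiSym.mod_left' h2, jacobiSym.mul_left, jacobiSym.at_two hab,
    jacobiSym.sq_one' (by rwa [Int.gcd_natCast_natCast]), mul_one]

lemma chi_b (p : ℕ) [Fact p.Prime] (hp8 : p % 8 = 1) (hp4 : p % 4 = 1) (a b : ℕ)
    (hp : p = a^2 + b^2) (hb0 : b ≠ 0) (hcop : Nat.Coprime a b) :
    legendreSym p (b:ℤ) = 1 := by
  set k := b.factorization 2 with hk
  set d := b / 2^k with hd
  have hbd : 2^k * d = b := Nat.ordProj_mul_ordCompl_eq_self b 2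
  have hd2 : ¬ 2 ∣ d := Nat.not_dvd_ordCompl Nat.prime_two hb0
  have hdodd : Odd d := Nat.odd_iff.mpr (by omega)
  have h1 : legendreSym p (b:ℤ) = jacobiSym ((2:ℤ)^k * (d:ℤ)) p := by
    rw [jacobiSym.legendreSym.to_jacobiSym]; congr 1; push_cast [← hbd]; ring
  have hpodd : p % 2 = 1 := by omega
  have h2 : jacobiSym (2:ℤ) p = 1 := by
    rw [jacobiSym.at_two (Nat.odd_iff.mpr hpodd), ZMod.χ₈_nat_eq_if_mod_eight]
    simp [hp8, hpodd]
  have h3 : jacobiSym ((d:ℕ):ℤ) p = 1 := by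
    rw [jacobiSym.quadratic_reciprocity_one_mod_four' hdodd hp4]
    have hdvd : ((d:ℕ):ℤ) ∣ (a:ℤ)^2 - p := by
      have hdb : (d:ℤ) ∣ (b:ℤ) := ⟨2^k, by rw [← hbd]; push_cast; ring⟩
      obtain ⟨c, hc⟩ := hdb
      exact ⟨-(b:ℤ)*c, by push_cast [hp]; rw [hc]; ring⟩
    have h2' : ((p:ℤ)) % ((d:ℕ):ℤ) = ((a:ℤ)^2) % ((d:ℕ):ℤ) :=
      Int.modEq_iff_dvd.mpr hdvd
    rw [jacobiSym.mod_left' h2', jacobiSym.sq_one']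
    rw [Int.gcd_natCast_natCast]
    exact Nat.Coprime.coprime_dvd_right ⟨2^k, by rw [← hbd, mul_comm]⟩ hcop
  rw [h1, jacobiSym.mul_left, jacobiSym.pow_left, h2, h3, one_pow, one_mul]
lemma crit (p : ℕ) [hfp : Fact p.Prime] (hp8 : p % 8 = 1) (a b : ℕ)
    (hp : p = a^2 + b^2) (ha : a % 2 = 1) :
    ((2 : ZMod p) ^ ((p-1)/4) = 1 ↔ b % 8 = 0) := by
  have hpp := hfp.out
  have hp2 : 2 ≤ p := hpp.two_le
  have hplt : 2 < p := by omega
  have hp4 : p % 4 = 1 := by omega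
  -- b ≠ 0
  have hb0 : b ≠ 0 := by
    rintro rfl
    simp at hp
    have hdvd : a ∣ p := ⟨a, by rw [hp]; ring⟩
    rcases hpp.eq_one_or_self_of_dvd a hdvd with h | h
    · rw [h, one_pow] at hp; omega
    · subst h; nlinarith
  -- b % 4 = 0
  have hA : a^2 % 8 = (a%8)^2 % 8 := Nat.pow_mod a 2 8
  have hB : b^2 % 8 = (b%8)^2 % 8 := Nat.pow_mod b 2 8
  have hP : p % 8 = (a^2 % 8 + b^2 % 8) % 8 := by rw [hp, Nat.add_mod]
  have hb4 : b % 4 = 0 := by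
    have ha8 : a%8 = 1 ∨ a%8 = 3 ∨ a%8 = 5 ∨ a%8 = 7 := by omega
    have hb8 : b%8 = 0 ∨ b%8 = 1 ∨ b%8 = 2 ∨ b%8 = 3 ∨ b%8 = 4 ∨ b%8 = 5 ∨ b%8 = 6 ∨ b%8 = 7 := by omega
    rcases ha8 with h1|h1|h1|h1 <;> rcases hb8 with h2|h2|h2|h2|h2|h2|h2|h2 <;>
      rw [h1] at hA <;> rw [h2] at hB <;> norm_num at hA hB <;> omega
  -- coprimality
  have hcop : Nat.Coprime a b := by
    have hg : Nat.gcd a b ∣ p := by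
      rw [hp]
      exact Nat.dvd_add (dvd_pow (Nat.gcd_dvd_left a b) two_ne_zero)
        (dvd_pow (Nat.gcd_dvd_right a b) two_ne_zero)
    rcases hpp.eq_one_or_self_of_dvd _ hg with h | h
    · exact h
    · exfalso
      have hpa : p ∣ a := h ▸ Nat.gcd_dvd_left a b
      have : p ≤ a := Nat.le_of_dvd (by omega) hpa
      nlinarith
  have hcop2 : Nat.Coprime a (a+b) := by
    simpa using hcop
  have habodd : Odd (a+b) := Nat.odd_iff.mpr (by omega)
  -- exponents
  obtain ⟨t, ht⟩ : ∃ t, 8*t+1 = p := ⟨(p-1)/8, by omega⟩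
  have hm : (p-1)/4 = 2*t := by omega
  have hm2 : p/2 = 2*((p-1)/4) := by omega
  set m := (p-1)/4 with hmdef
  -- ZMod computation
  haveI : Fact (2 < p) := ⟨hplt⟩
  set A := (a : ZMod p) with hA'
  set B := (b : ZMod p) with hB'
  have h0 : A^2 + B^2 = 0 := by
    have hz : ((a^2+b^2 : ℕ) : ZMod p) = 0 := by rw [← hp]; exact ZMod.natCast_self p
    push_cast at hz; exact hz
  have h2 : (A+B)^2 = 2*(A*B) := by linear_combination h0
  have h3 : A^2 = -B^2 := by linear_combination h0
  have e1 : ((legendreSym p ((a:ℤ)+b) : ℤ) : ZMod p) = (A+B)^(p/2) := by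
    have := legendreSym.eq_pow p ((a:ℤ)+(b:ℤ))
    rw [this]; push_cast; ring
  have e2 : ((legendreSym p ((b:ℤ)) : ℤ) : ZMod p) = B^(p/2) := by
    have := legendreSym.eq_pow p ((b:ℤ))
    rw [this]; push_cast; ring
  have eB : B^(p/2) = 1 := by
    rw [← e2, chi_b p hp8 hp4 a b hp hb0 hcop]; norm_num
  have eA : A^m = (-1)^t * B^m := by
    rw [hm, pow_mul, pow_mul, h3, neg_pow]
  have key : ((legendreSym p ((a:ℤ)+b) : ℤ) : ZMod p) = 2^m * (-1)^t := by
    rw [e1, hm2, pow_mul, h2, mul_pow, mul_pow]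
    have : B^m * B^m = B^(p/2) := by rw [← pow_add, hm2]; ring_nf
    calc (2:ZMod p)^m * (A^m * B^m) = 2^m * ((-1)^t * (B^m*B^m)) := by rw [eA]; ring
      _ = 2^m * (-1)^t := by rw [this, eB, mul_one]
  -- bring in χ₈
  set s : ℤ := ZMod.χ₈ ((a+b : ℕ) : ZMod 8) with hsdef
  have hs : s = if (a+b)%8 = 1 ∨ (a+b)%8 = 7 then 1 else -1 := by
    rw [hsdef, ZMod.χ₈_nat_eq_if_mod_eight]
    have : (a+b)%2 = 1 := Nat.odd_iff.mp habodd
    simp [this]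
  have key2 : (2 : ZMod p)^m = (((s * (-1)^t : ℤ)) : ZMod p) := by
    have h5 := key
    rw [chi_ab p hp4 a b hp habodd hcop2, ← hsdef] at h5
    push_cast
    rw [h5]
    have h4 : ((-1 : ZMod p)^t)*((-1 : ZMod p)^t) = 1 := by
      rw [← pow_add, ← two_mul, pow_mul]; norm_num
    rw [mul_assoc, h4, mul_one]
  have hiff := aux_parity a b p t hp ha hb4 ht
  rw [← hs] at hiff
  constructor
  · intro h1
    rw [← hiff]
    have hS : s * (-1:ℤ)^t = 1 ∨ s * (-1:ℤ)^t = -1 := by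
      rcases Nat.even_or_odd t with h|h
      · rw [h.neg_one_pow, hs]; split_ifs <;> norm_num
      · rw [h.neg_one_pow, hs]; split_ifs <;> norm_num
    rcases hS with h | h
    · exact h
    · exfalso
      rw [h1, h] at key2
      push_cast at key2
      exact ZMod.neg_one_ne_one key2.symm
  · intro h1
    rw [key2, hiff.mpr h1]
    norm_num

/-- Gauss's biquadratic residue criterion for 2: for a prime
`ℓ ≡ 1 (mod 8)`, one has `2^{(ℓ-1)/4} ≡ 1 (mod ℓ)` iff `ℓ = A² + 64B²` for some
integers `A, B`. -/
theorem stmt_16 (ℓ : ℕ) (hℓ : ℓ.Prime) (h8 : ℓ % 8 = 1) :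
    (2 : ZMod ℓ) ^ ((ℓ - 1) / 4) = 1 ↔ ∃ A B : ℤ, (ℓ : ℤ) = A ^ 2 + 64 * B ^ 2 := by
  haveI : Fact ℓ.Prime := ⟨hℓ⟩
  constructor
  · intro h
    obtain ⟨x, y, hxy⟩ := Nat.Prime.sq_add_sq (p := ℓ) (by omega)
    have hX : x^2 % 2 = (x%2)^2 % 2 := Nat.pow_mod x 2 2
    have hY : y^2 % 2 = (y%2)^2 % 2 := Nat.pow_mod y 2 2
    have hL : ℓ % 2 = (x^2 % 2 + y^2 % 2) % 2 := by rw [← hxy, Nat.add_mod]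
    have hx2 : x%2 = 0 ∨ x%2 = 1 := by omega
    have hy2 : y%2 = 0 ∨ y%2 = 1 := by omega
    have hpar : (x%2 = 1 ∧ y%2 = 0) ∨ (x%2 = 0 ∧ y%2 = 1) := by
      rcases hx2 with h1|h1 <;> rcases hy2 with h2|h2 <;>
        rw [h1] at hX <;> rw [h2] at hY <;> norm_num at hX hY <;> omega
    rcases hpar with ⟨h1, _⟩ | ⟨_, h1⟩
    · have hy8 : y % 8 = 0 := (crit ℓ h8 x y hxy.symm h1).mp h
      obtain ⟨c, hc⟩ : ∃ c, y = 8*c := ⟨y/8, by omega⟩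
      exact ⟨x, c, by rw [← hxy, hc]; push_cast; ring⟩
    · have hyx : ℓ = y^2 + x^2 := by omega
      have hx8 : x % 8 = 0 := (crit ℓ h8 y x hyx h1).mp h
      obtain ⟨c, hc⟩ : ∃ c, x = 8*c := ⟨x/8, by omega⟩
      exact ⟨y, c, by rw [← hxy, hc]; push_cast; ring⟩
  · rintro ⟨A, B, hAB⟩
    set a := A.natAbs with hadef
    set b := 8 * B.natAbs with hbdef
    have hab : ℓ = a^2 + b^2 := by
      have h1 : ((a^2 + b^2 : ℕ) : ℤ) = (ℓ : ℤ) := by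
        push_cast [hadef, hbdef]
        rw [hAB, mul_pow, sq_abs, sq_abs]
        ring
      exact_mod_cast h1.symm
    have haodd : a % 2 = 1 := by
      have hA : a^2 % 2 = (a%2)^2 % 2 := Nat.pow_mod a 2 2
      have hB : b^2 % 2 = (b%2)^2 % 2 := Nat.pow_mod b 2 2
      have hL : ℓ % 2 = (a^2 % 2 + b^2 % 2) % 2 := by rw [hab, Nat.add_mod]
      have ha2 : a%2 = 0 ∨ a%2 = 1 := by omega
      have hb8 : b%2 = 0 := by omega
      rcases ha2 with h1|h1 <;> rw [h1] at hA <;> rw [hb8] at hB <;>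
        norm_num at hA hB <;> omega
    exact (crit ℓ h8 a b hab haodd).mpr (by omega)
end
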